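/- Let x = ζ^{log₂ φ} where ζ ≥ 0 and φ = (1+√5)/2, and define δ'(ζ) = 2·(8ζ)^{log₂ φ} = 2·8^{log₂ φ}·x. If ζ ∈ [0, 1/4], then 2·(1 − δ'(ζ)) ≤ (1 − δ'(2ζ)) + (1 − δ'(ζ²)). Equivalently, δ'(2ζ) + δ'(ζ²) ≤ 2·δ'(ζ) for ζ ∈ [0,1/4]. -/

import Mathlib

/-- `δ'(ζ) = 2·(8ζ)^{log₂ φ}` with `φ` the golden ratio. -/
noncomputable def deltaP (ζ : ℝ) : ℝ :=
  2 * (8 * ζ) ^ Real.logb 2 ((1 + Real.sqrt 5) / 2)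

/-!
Put `x = ζ ^ log₂ φ`. Since `2 ^ log₂ φ = φ`, we have `δ'(2ζ) = φ δ'(ζ)` and `δ'(ζ²) = x δ'(ζ)`,
so the claim is `δ'(ζ) (φ + x - 2) ≤ 0`. On `[0, 1/4]` we have `x ≤ (1/4) ^ log₂ φ = φ⁻² = 2 - φ`,
the last equality being `φ² = φ + 1`.
-/

open Real goldenRatio

theorem mul_rpow_logb {b c a : ℝ} (hb : 0 < b) (hb₁ : b ≠ 1) (hc : 0 < c) (ha : 0 ≤ a) :
    (b * a) ^ logb b c = c * a ^ logb b c := by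
  rw [mul_rpow hb.le ha, rpow_logb hb hb₁ hc]

theorem goldenRatio_mul_two_mul_rpow_logb {a : ℝ} (ha : 0 ≤ a) :
    (2 * a) ^ logb 2 φ = φ * a ^ logb 2 φ :=
  mul_rpow_logb two_pos (by norm_num) goldenRatio_pos ha

theorem one_div_four_rpow_logb_two_goldenRatio : (1 / 4 : ℝ) ^ logb 2 φ = 2 - φ := by
  have h_quarter : φ ^ 2 * (1 / 4 : ℝ) ^ logb 2 φ = 1 := by
    calc φ ^ 2 * (1 / 4 : ℝ) ^ logb 2 φ
        = (2 * (2 * (1 / 4 : ℝ))) ^ logb 2 φ := by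
          rw [goldenRatio_mul_two_mul_rpow_logb (by norm_num),
            goldenRatio_mul_two_mul_rpow_logb (by norm_num)]
          ring
      _ = 1 := by norm_num
  have h_two_sub : φ ^ 2 * (2 - φ) = 1 := by
    calc φ ^ 2 * (2 - φ) = (ψ * φ) ^ 2 := by
          rw [mul_pow, goldenConj_sq, ← one_sub_goldenConj]; ring
      _ = 1 := by rw [goldenConj_mul_goldenRatio]; norm_num
  exact mul_left_cancel₀ (pow_ne_zero 2 goldenRatio_ne_zero) (h_quarter.trans h_two_sub.symm)

theorem rpow_logb_two_goldenRatio_le {ζ : ℝ} (h0 : 0 ≤ ζ) (h1 : ζ ≤ 1 / 4) :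
    ζ ^ logb 2 φ ≤ 2 - φ := by
  rw [← one_div_four_rpow_logb_two_goldenRatio]
  exact rpow_le_rpow h0 h1 (logb_pos one_lt_two one_lt_goldenRatio).le

theorem deltaP_eq (ζ : ℝ) : deltaP ζ = 2 * (8 * ζ) ^ logb 2 φ := rfl

theorem deltaP_nonneg {ζ : ℝ} (hζ : 0 ≤ ζ) : 0 ≤ deltaP ζ := by
  rw [deltaP_eq]
  positivity

theorem deltaP_two_mul {ζ : ℝ} (hζ : 0 ≤ ζ) : deltaP (2 * ζ) = φ * deltaP ζ := by
  rw [deltaP_eq, deltaP_eq, mul_left_comm 8, goldenRatio_mul_two_mul_rpow_logb (by positivity)]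
  ring

theorem deltaP_sq {ζ : ℝ} (hζ : 0 ≤ ζ) : deltaP (ζ ^ 2) = deltaP ζ * ζ ^ logb 2 φ := by
  rw [deltaP_eq, deltaP_eq, sq, ← mul_assoc, mul_rpow (by positivity) hζ, mul_assoc]

theorem deltaP_convexity_bound (ζ : ℝ) (h0 : 0 ≤ ζ) (h1 : ζ ≤ 1 / 4) :
    2 * (1 - deltaP ζ) ≤ (1 - deltaP (2 * ζ)) + (1 - deltaP (ζ ^ 2)) := by
  rw [deltaP_two_mul h0, deltaP_sq h0]
  have hx := rpow_logb_two_goldenRatio_le h0 h1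
  linarith [mul_nonpos_of_nonneg_of_nonpos (deltaP_nonneg h0) (sub_nonpos.2 hx)]
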